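/- arXiv:0706.0879 — 7 statements merged into one kernel-verified Lean document; each statement's English description precedes it below -/
import Mathlib

section
/- Let λ > 0 and let Y be a random variable taking values in the non-negative integers. Then E[λ g(Y+1) − Y g(Y)] = 0 for every finitely supported function g : ℤ≥0 → ℝ if and only if Y has the Poisson distribution Po(λ), i.e. P(Y = j) = e^{−λ} λ^j / j! for all j ∈ ℤ≥0. -/
/-!
Write `p n = P(Y = n)`. Shifting the index in the second half of
`E[λ g(Y+1) - Y g(Y)] = ∑ₙ pₙ (λ g(n+1) - n g(n))` turns it into `∑ₙ (λ pₙ - (n+1) pₙ₊₁) g(n+1)`,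
so the Stein identity for all finitely supported `g` (test with indicators of points) is
equivalent to the recursion `(n+1) pₙ₊₁ = λ pₙ`. The recursion says `pₙ = p₀ λⁿ / n!`, and
`∑ pₙ = 1` together with the exponential series then forces `p₀ = e^{-λ}`.
-/

open MeasureTheory

lemma integral_comp_eq_tsum_of_support_finite {Ω : Type*} [MeasurableSpace Ω] (P : Measure Ω)
    [IsFiniteMeasure P] {Y : Ω → ℕ} (hY : Measurable Y) {f : ℕ → ℝ}
    (hf : (Function.support f).Finite) :
    ∫ ω, f (Y ω) ∂P = ∑' n, (P {ω | Y ω = n}).toReal * f n := by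
  have hint : Integrable f (P.map Y) :=
    (integrableOn_iff_integrable_of_support_subset subset_rfl).1 (IntegrableOn.of_finite hf)
  rw [← integral_map hY.aemeasurable hint.aestronglyMeasurable, integral_countable hint]
  refine tsum_congr fun n => ?_
  rw [map_measureReal_apply hY (measurableSet_singleton n), smul_eq_mul, measureReal_def]
  rfl

lemma tsum_toReal_measure_fiber_eq_one {Ω : Type*} [MeasurableSpace Ω] (P : Measure Ω)
    [IsProbabilityMeasure P] {Y : Ω → ℕ} (hY : Measurable Y) :
    ∑' n, (P {ω | Y ω = n}).toReal = 1 := by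
  have hcover : ⋃ n, Y ⁻¹' {n} = Set.univ := by
    rw [← Set.preimage_iUnion, Set.iUnion_of_singleton, Set.preimage_univ]
  rw [← ENNReal.tsum_toReal_eq fun n => measure_ne_top P _]
  change (∑' n, P (Y ⁻¹' {n})).toReal = 1
  rw [← measure_iUnion (pairwise_disjoint_fiber Y) fun n => hY (measurableSet_singleton n),
    hcover, measure_univ, ENNReal.toReal_one]

lemma tsum_mul_stein_eq_tsum_mul_succ (p : ℕ → ℝ) (lam : ℝ) {g : ℕ → ℝ}
    (hg : (Function.support g).Finite) :
    ∑' n, p n * (lam * g (n + 1) - n * g n) =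
      ∑' n, (lam * p n - (n + 1) * p (n + 1)) * g (n + 1) := by
  have hsum : ∀ h : ℕ → ℝ, Summable fun n => h n * g n := fun h =>
    summable_of_hasFiniteSupport (hg.subset (Function.support_mul_subset_right _ _))
  have hsum_succ : ∀ h : ℕ → ℝ, Summable fun n => h n * g (n + 1) := fun h =>
    summable_of_hasFiniteSupport ((hg.preimage Nat.succ_injective.injOn).subset
      (Function.support_mul_subset_right _ _))
  have hshift : ∑' n, n * p n * g n = ∑' n, (n + 1) * p (n + 1) * g (n + 1) := by
    rw [(hsum _).tsum_eq_zero_add]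
    simp
  calc ∑' n, p n * (lam * g (n + 1) - n * g n)
      = ∑' n, lam * p n * g (n + 1) - ∑' n, n * p n * g n := by
        rw [← (hsum_succ _).tsum_sub (hsum _)]
        exact tsum_congr fun n => by ring
    _ = ∑' n, (lam * p n - (n + 1) * p (n + 1)) * g (n + 1) := by
        rw [hshift, ← (hsum_succ _).tsum_sub (hsum_succ _)]
        exact tsum_congr fun n => by ring

lemma tsum_mul_stein_eq_zero_iff (p : ℕ → ℝ) (lam : ℝ) :
    (∀ g : ℕ → ℝ, (Function.support g).Finite →
        ∑' n, p n * (lam * g (n + 1) - n * g n) = 0) ↔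
      ∀ j : ℕ, (j + 1) * p (j + 1) = lam * p j := by
  refine ⟨fun h j => ?_, fun h g hg => ?_⟩
  · have hfin : (Function.support (Pi.single (j + 1) (1 : ℝ))).Finite :=
      (Set.finite_singleton (j + 1)).subset Pi.support_single_subset
    have hj := h _ hfin
    rw [tsum_mul_stein_eq_tsum_mul_succ p lam hfin,
      tsum_eq_single j fun n hn => by simp [hn]] at hj
    simp only [Pi.single_eq_same, mul_one] at hj
    linarith
  · rw [tsum_mul_stein_eq_tsum_mul_succ p lam hg]
    simp [h]

lemma eq_mul_pow_div_factorial_of_succ_mul (p : ℕ → ℝ) (lam : ℝ)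
    (hp : ∀ j : ℕ, (j + 1) * p (j + 1) = lam * p j) (j : ℕ) :
    p j = p 0 * (lam ^ j / j.factorial) := by
  induction j with
  | zero => simp
  | succ j ih =>
    have hstep : p (j + 1) = lam * p j / (j + 1) := by
      rw [← hp j]
      field_simp
    rw [hstep, ih, Nat.factorial_succ]
    push_cast
    field_simp
    ring

lemma succ_mul_poisson_succ (lam : ℝ) (j : ℕ) :
    (j + 1) * (Real.exp (-lam) * lam ^ (j + 1) / (j + 1).factorial) =
      lam * (Real.exp (-lam) * lam ^ j / j.factorial) := by
  rw [Nat.factorial_succ, Nat.cast_mul]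
  field_simp
  push_cast
  ring

lemma succ_mul_eq_iff_eq_poisson {p : ℕ → ℝ} (hp : ∑' n, p n = 1) (lam : ℝ) :
    (∀ j : ℕ, (j + 1) * p (j + 1) = lam * p j) ↔
      ∀ j : ℕ, p j = Real.exp (-lam) * lam ^ j / j.factorial := by
  refine ⟨fun h => ?_, fun h j => ?_⟩
  · have hp0 : p 0 * Real.exp lam = 1 := by
      rw [Real.exp_eq_exp_ℝ, ← (NormedSpace.expSeries_div_hasSum_exp lam).tsum_eq,
        ← tsum_mul_left, ← hp]
      exact tsum_congr fun j => (eq_mul_pow_div_factorial_of_succ_mul p lam h j).symm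
    intro j
    rw [eq_mul_pow_div_factorial_of_succ_mul p lam h j, Real.exp_neg,
      eq_inv_of_mul_eq_one_left hp0]
    ring
  · rw [h, h]
    exact succ_mul_poisson_succ lam j

theorem poisson_stein_characterization_general
    {Ω : Type*} [MeasurableSpace Ω] (P : Measure Ω) [IsProbabilityMeasure P]
    (lam : ℝ) (Y : Ω → ℕ) (hY : Measurable Y) :
    (∀ g : ℕ → ℝ, (Function.support g).Finite →
        ∫ ω, (lam * g (Y ω + 1) - (Y ω : ℝ) * g (Y ω)) ∂P = 0) ↔
      ∀ j : ℕ, (P {ω | Y ω = j}).toReal =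
        Real.exp (-lam) * lam ^ j / (Nat.factorial j : ℝ) := by
  set p : ℕ → ℝ := fun n => (P {ω | Y ω = n}).toReal
  have hexpect : ∀ g : ℕ → ℝ, (Function.support g).Finite →
      ∫ ω, (lam * g (Y ω + 1) - (Y ω : ℝ) * g (Y ω)) ∂P =
        ∑' n, p n * (lam * g (n + 1) - n * g n) := fun g hg =>
    integral_comp_eq_tsum_of_support_finite P hY (f := fun n => lam * g (n + 1) - n * g n)
      (((hg.preimage Nat.succ_injective.injOn).union hg).subset
        ((Function.support_sub _ _).trans (Set.union_subset_union
          (Function.support_mul_subset_right _ _) (Function.support_mul_subset_right _ _))))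
  calc _ ↔ ∀ g : ℕ → ℝ, (Function.support g).Finite →
        ∑' n, p n * (lam * g (n + 1) - n * g n) = 0 :=
        forall₂_congr fun g hg => by rw [hexpect g hg]
    _ ↔ ∀ j : ℕ, (j + 1) * p (j + 1) = lam * p j := tsum_mul_stein_eq_zero_iff p lam
    _ ↔ _ := succ_mul_eq_iff_eq_poisson (tsum_toReal_measure_fiber_eq_one P hY) lam

/-- For `λ > 0` and a `ℕ`-valued random variable `Y`, we have
`E[λ g(Y+1) − Y g(Y)] = 0` for every finitely supported `g : ℕ → ℝ` if and only if
`Y ∼ Po(λ)`, i.e. `P(Y = j) = e^{−λ} λ^j / j!` for all `j`. -/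
theorem poisson_stein_characterization
    {Ω : Type*} [MeasurableSpace Ω] (P : Measure Ω) [IsProbabilityMeasure P]
    (lam : ℝ) (hlam : 0 < lam) (Y : Ω → ℕ) (hY : Measurable Y) :
    (∀ g : ℕ → ℝ, (Function.support g).Finite →
        ∫ ω, (lam * g (Y ω + 1) - (Y ω : ℝ) * g (Y ω)) ∂P = 0) ↔
      ∀ j : ℕ, (P {ω | Y ω = j}).toReal =
        Real.exp (-lam) * lam ^ j / (Nat.factorial j : ℝ) :=
  poisson_stein_characterization_general P lam Y hY
end

section
/- Let λ > 0 and A ⊆ ℤ≥0. Define g_A : ℤ≥0 → ℝ by g_A(0) = 0 and g_A(j+1) = (j! / λ^{j+1}) Σ_{i=0}^{j} (1_A(i) − Po(λ)(A)) λ^i / i! for j ≥ 0. Then g_A solves the Stein equation: for every j ∈ ℤ≥0, λ g_A(j+1) − j g_A(j) = 1_A(j) − Po(λ)(A). Moreover g_A is bounded. -/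
open MeasureTheory

/-- `Po(λ)(A) = Σ_{j ∈ A} e^{−λ} λ^j / j!`. -/
noncomputable def poissonProb (lam : ℝ) (A : Set ℕ) : ℝ :=
  ∑' j : ℕ, Set.indicator A (fun j => Real.exp (-lam) * lam ^ j / (Nat.factorial j : ℝ)) j

/-- The canonical solution of the Poisson Stein equation for the test function `1_A`:
`g_A(0) = 0` and `g_A(j+1) = (j!/λ^{j+1}) Σ_{i=0}^{j} (1_A(i) − Po(λ)(A)) λ^i / i!`. -/
noncomputable def steinSol (lam : ℝ) (A : Set ℕ) : ℕ → ℝ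
  | 0 => 0
  | (j + 1) => (Nat.factorial j : ℝ) / lam ^ (j + 1) *
      ∑ i ∈ Finset.range (j + 1),
        (Set.indicator A (fun _ => (1 : ℝ)) i - poissonProb lam A) * lam ^ i /
          (Nat.factorial i : ℝ)

/-!
With `w i = λ ^ i / i!`, the constant `Po(λ)(A)` is exactly the one making
`∑ i, (1_A(i) - Po(λ)(A)) * w i` vanish. Hence the partial sum in `g_A(j+1)` is minus the tail
from `j + 1`; its coefficients lie in `[-1, 1]` and `k! (j+1)! ≤ (k+j+1)!`, so the tail is at most
`w (j+1) * e^λ`, which gives `|g_A(j+1)| ≤ e^λ / (j+1)`. The Stein equation itself is the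
relation between consecutive partial sums.
-/

open Finset Nat

lemma hasSum_pow_div_factorial_exp (x : ℝ) : HasSum (fun n => x ^ n / n !) (Real.exp x) := by
  simpa [Real.exp_eq_exp_ℝ] using NormedSpace.expSeries_div_hasSum_exp x

lemma tsum_pow_add_div_factorial_add_le {x : ℝ} (hx : 0 ≤ x) (n : ℕ) :
    ∑' k, x ^ (k + n) / (k + n)! ≤ x ^ n / n ! * Real.exp x := by
  have hsum := Real.summable_pow_div_factorial x
  rw [← (hasSum_pow_div_factorial_exp x).tsum_eq, ← tsum_mul_left]
  refine Summable.tsum_le_tsum (fun k => ?_) ((summable_nat_add_iff n).2 hsum) (hsum.mul_left _)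
  have hfac : (k ! * n ! : ℝ) ≤ (k + n)! := by
    exact_mod_cast Nat.le_of_dvd (factorial_pos _) (factorial_mul_factorial_dvd_factorial_add k n)
  rw [pow_add, div_mul_div_comm (x ^ n), mul_comm (x ^ n), mul_comm (n ! : ℝ)]
  exact div_le_div_of_nonneg_left (by positivity) (by positivity) hfac

lemma abs_sum_range_mul_pow_div_factorial_le {x : ℝ} (hx : 0 ≤ x) {c : ℕ → ℝ}
    (hc : ∀ i, |c i| ≤ 1) (h0 : ∑' i, c i * x ^ i / i ! = 0) (n : ℕ) :
    |∑ i ∈ range n, c i * x ^ i / i !| ≤ x ^ n / n ! * Real.exp x := by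
  have hdom : ∀ i, ‖c i * x ^ i / (i ! : ℝ)‖ ≤ x ^ i / i ! := fun i => by
    rw [Real.norm_eq_abs, mul_div_assoc, abs_mul, abs_of_nonneg (by positivity : 0 ≤ x ^ i / i !)]
    exact mul_le_of_le_one_left (by positivity) (hc i)
  have hsum := Real.summable_pow_div_factorial x
  have htail := (Summable.of_norm_bounded hsum hdom).sum_add_tsum_nat_add n
  rw [h0, add_eq_zero_iff_eq_neg] at htail
  rw [htail, abs_neg, ← Real.norm_eq_abs]
  exact (tsum_of_norm_bounded ((summable_nat_add_iff n).2 hsum).hasSum fun k => hdom _).trans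
    (tsum_pow_add_div_factorial_add_le hx n)

lemma indicator_one_mul_pow_div_factorial (lam : ℝ) (A : Set ℕ) (i : ℕ) :
    Set.indicator A (fun _ => (1 : ℝ)) i * lam ^ i / i ! =
      Real.exp lam * Set.indicator A (fun j => Real.exp (-lam) * lam ^ j / j !) i := by
  by_cases h : i ∈ A
  · simp [h, Real.exp_neg, mul_div_assoc]
  · simp [h]

lemma tsum_indicator_sub_poissonProb_mul_pow_div_factorial (lam : ℝ) (A : Set ℕ) :
    ∑' i, (Set.indicator A (fun _ => (1 : ℝ)) i - poissonProb lam A) * lam ^ i / i ! = 0 := by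
  have hsum := Real.summable_pow_div_factorial lam
  have hsumA : Summable fun j => Set.indicator A (fun j => Real.exp (-lam) * lam ^ j / j !) j := by
    simpa only [mul_div_assoc] using (hsum.mul_left _).indicator A
  simp_rw [sub_mul, sub_div, mul_div_assoc (poissonProb lam A), indicator_one_mul_pow_div_factorial]
  rw [(hsumA.mul_left _).tsum_sub (hsum.mul_left _), tsum_mul_left, tsum_mul_left,
    (hasSum_pow_div_factorial_exp lam).tsum_eq, ← poissonProb, mul_comm, sub_self]

lemma poissonProb_nonneg {lam : ℝ} (hlam : 0 ≤ lam) (A : Set ℕ) : 0 ≤ poissonProb lam A :=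
  tsum_nonneg fun _ => Set.indicator_nonneg (fun _ _ => by positivity) _

lemma poissonProb_le_one {lam : ℝ} (hlam : 0 ≤ lam) (A : Set ℕ) :
    poissonProb lam A ≤ 1 := by
  have hw : HasSum (fun j => Real.exp (-lam) * lam ^ j / j !) 1 := by
    simpa [mul_div_assoc, ← Real.exp_add] using
      (hasSum_pow_div_factorial_exp lam).mul_left (Real.exp (-lam))
  rw [← hw.tsum_eq]
  exact Summable.tsum_le_tsum (fun _ => Set.indicator_le_self' (fun _ _ => by positivity) _)
    (hw.summable.indicator A) hw.summable

lemma abs_indicator_sub_poissonProb_le_one {lam : ℝ} (hlam : 0 ≤ lam) (A : Set ℕ) (i : ℕ) :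
    |Set.indicator A (fun _ => (1 : ℝ)) i - poissonProb lam A| ≤ 1 := by
  have := poissonProb_nonneg hlam A
  have := poissonProb_le_one hlam A
  rw [abs_le]
  by_cases h : i ∈ A <;> simp only [h, Set.indicator_of_mem, Set.indicator_of_notMem,
    not_false_eq_true] <;> constructor <;> linarith

lemma steinSol_stein_eq {lam : ℝ} (hlam : lam ≠ 0) (A : Set ℕ) (j : ℕ) :
    lam * steinSol lam A (j + 1) - (j : ℝ) * steinSol lam A j =
      Set.indicator A (fun _ => (1 : ℝ)) j - poissonProb lam A := by
  cases j with
  | zero => simp [steinSol]; field_simp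
  | succ j =>
    simp only [steinSol]
    rw [sum_range_succ, factorial_succ]
    push_cast
    field_simp
    ring

lemma abs_steinSol_succ_le {lam : ℝ} (hlam : 0 < lam) (A : Set ℕ) (j : ℕ) :
    |steinSol lam A (j + 1)| ≤ Real.exp lam / (j + 1) := by
  have hpartial := abs_sum_range_mul_pow_div_factorial_le hlam.le
    (abs_indicator_sub_poissonProb_le_one hlam.le A)
    (tsum_indicator_sub_poissonProb_mul_pow_div_factorial lam A) (j + 1)
  rw [steinSol, abs_mul, abs_of_pos (by positivity : (0 : ℝ) < j ! / lam ^ (j + 1))]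
  calc (j ! / lam ^ (j + 1) : ℝ) * |_|
      ≤ j ! / lam ^ (j + 1) * (lam ^ (j + 1) / (j + 1)! * Real.exp lam) := by gcongr
    _ = Real.exp lam / (j + 1) := by
      rw [factorial_succ]; push_cast; field_simp

/-- For `λ > 0` and `A ⊆ ℤ≥0`, the function `g_A` solves the Stein equation
`λ g_A(j+1) − j g_A(j) = 1_A(j) − Po(λ)(A)` for every `j`, and `g_A` is bounded. -/
theorem steinSol_solves_and_bounded (lam : ℝ) (hlam : 0 < lam) (A : Set ℕ) :
    (∀ j : ℕ, lam * steinSol lam A (j + 1) - (j : ℝ) * steinSol lam A j =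
        Set.indicator A (fun _ => (1 : ℝ)) j - poissonProb lam A) ∧
      ∃ C : ℝ, ∀ j : ℕ, |steinSol lam A j| ≤ C := by
  refine ⟨steinSol_stein_eq hlam.ne' A, Real.exp lam, ?_⟩
  rintro (_ | j)
  · simp [steinSol, (Real.exp_pos lam).le]
  · exact (abs_steinSol_succ_le hlam A j).trans
      (div_le_self (Real.exp_pos lam).le (by linarith [j.cast_nonneg (α := ℝ)]))
end

section
/- Let λ > 0 and let W be a ℤ≥0-valued random variable with E[W] < ∞. Let τ : ℤ≥0 → ℝ be a function with E|τ(W)| < ∞ such that E[(W − λ) g(W)] = E[τ(W) (g(W+1) − g(W))] for every bounded function g : ℤ≥0 → ℝ. Then d_TV(L(W), Po(λ)) ≤ ((1 − e^{−λ}) / λ) · E|τ(W) − λ|. -/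
open MeasureTheory

/-! Stein's method. For `A ⊆ ℕ` let `g_A` solve the Stein equation
`λ g(j+1) - j g(j) = 1_A(j) - Po(λ)(A)`. Evaluating at `W`, taking expectations and applying the
hypothesis to the bounded function `g_A` gives `P(W ∈ A) - Po(λ)(A) = E[(λ - τ(W)) Δg_A(W)]`,
so it suffices to show `|Δg_A| ≤ (1 - e^{-λ})/λ`. Writing
`g_A(j+1) = Po(A ∩ [0,j]) t_j - Po(A ∩ (j,∞)) h_j` with `t_j` decreasing and `h_j` increasing
shows `Δg_A(j) ≤ 0` for `j ∉ A`. Since `g_A` is additive in `A`, `Δg_A(j) ≤ Δg_{{j}}(j)`, which is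
computed explicitly, and `g_{Aᶜ} = -g_A` gives the lower bound. -/

open ProbabilityTheory Set
open scoped NNReal

namespace PoissonStein

section FiniteMeasure

variable {μ : Measure ℕ} [IsFiniteMeasure μ]

lemma measureReal_inter_Iic (S : Set ℕ) (j : ℕ) :
    μ.real (S ∩ Iic j) = μ.real (S ∩ Iio j) + μ.real (S ∩ {j}) := by
  rw [← measureReal_union (Disjoint.mono inter_subset_right inter_subset_right (by simp))
    .of_discrete, ← inter_union_distrib_left, Iio_union_right]

lemma measureReal_Iic_add_one (j : ℕ) :
    μ.real (Iic (j + 1)) = μ.real (Iic j) + μ.real {j + 1} := by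
  simpa [Iio_add_one_eq_Iic] using measureReal_inter_Iic (μ := μ) univ (j + 1)

lemma measureReal_inter_Iic_add_inter_Ioi (S : Set ℕ) (j : ℕ) :
    μ.real (S ∩ Iic j) + μ.real (S ∩ Ioi j) = μ.real S := by
  rw [← measureReal_union (Disjoint.mono inter_subset_right inter_subset_right (by simp))
    .of_discrete, ← inter_union_distrib_left, Iic_union_Ioi, inter_univ]

end FiniteMeasure

variable {r : ℝ≥0}

lemma mul_poissonMeasure_real_singleton (r : ℝ≥0) (j : ℕ) :
    r * Po(r).real {j} = (j + 1) * Po(r).real {j + 1} := by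
  simp only [poissonMeasure_real_singleton, Nat.factorial_succ]
  push_cast
  field_simp
  ring

lemma mul_poissonMeasure_real_Iic_le (r : ℝ≥0) (j : ℕ) :
    r * Po(r).real (Iic j) ≤ (j + 1) * (Po(r).real (Iic (j + 1)) - Po(r).real {0}) := by
  induction j with
  | zero =>
    have h := mul_poissonMeasure_real_singleton r 0
    have h0 : Iic (0 : ℕ) = {0} := Iic_bot
    simp only [measureReal_Iic_add_one, h0] at *
    push_cast at *
    linarith
  | succ j ih =>
    have h0 : Po(r).real {0} ≤ Po(r).real (Iic (j + 1)) := measureReal_mono (by simp)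
    rw [measureReal_Iic_add_one (j + 1), measureReal_Iic_add_one j, mul_add,
      mul_poissonMeasure_real_singleton] at *
    push_cast
    nlinarith [measureReal_nonneg (μ := Po(r)) (s := {j + 1 + 1})]

lemma hasSum_poissonMeasure_real_Ioi (r : ℝ≥0) (j : ℕ) :
    HasSum (fun m ↦ Po(r).real {m + (j + 1)}) (Po(r).real (Ioi j)) := by
  have h := hasSum_one_poissonMeasure r
  simp only [← poissonMeasure_real_singleton] at h
  rw [← hasSum_nat_add_iff' (j + 1), sum_measureReal_singleton, Finset.coe_range,
    Iio_add_one_eq_Iic, ← probReal_univ (μ := Po(r)), ← measureReal_compl .of_discrete,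
    compl_Iic] at h
  exact h

lemma mul_poissonMeasure_real_Ioi_le (r : ℝ≥0) (j : ℕ) :
    (j + 1) * Po(r).real (Ioi (j + 1)) ≤ r * Po(r).real (Ioi j) := by
  refine hasSum_le (fun m ↦ ?_) ((hasSum_poissonMeasure_real_Ioi r (j + 1)).mul_left _)
    ((hasSum_poissonMeasure_real_Ioi r j).mul_left _)
  rw [mul_poissonMeasure_real_singleton, ← add_assoc]
  gcongr
  linarith [(m.cast_nonneg : (0:ℝ) ≤ m)]

lemma poissonMeasure_real_zero (r : ℝ≥0) : Po(r).real {0} = Real.exp (-r) := by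
  simp [poissonMeasure_real_singleton]

lemma poissonProb_eq_measureReal (r : ℝ≥0) (A : Set ℕ) : poissonProb r A = Po(r).real A := by
  rw [← integral_indicator_one .of_discrete, integral_poissonMeasure, poissonProb]
  congr with j
  by_cases hj : j ∈ A <;> simp [hj]

lemma mul_poissonMeasure_real_singleton_pos (hr : 0 < r) (j : ℕ) : 0 < r * Po(r).real {j} :=
  mul_pos hr (poissonMeasure_real_singleton_pos j hr)

noncomputable def tailRatio (r : ℝ≥0) (j : ℕ) : ℝ := Po(r).real (Ioi j) / (r * Po(r).real {j})

noncomputable def headRatio (r : ℝ≥0) (j : ℕ) : ℝ := Po(r).real (Iic j) / (r * Po(r).real {j})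

lemma tailRatio_nonneg (hr : 0 < r) (j : ℕ) : 0 ≤ tailRatio r j :=
  div_nonneg measureReal_nonneg (mul_poissonMeasure_real_singleton_pos hr j).le

lemma headRatio_nonneg (hr : 0 < r) (j : ℕ) : 0 ≤ headRatio r j :=
  div_nonneg measureReal_nonneg (mul_poissonMeasure_real_singleton_pos hr j).le

lemma tailRatio_antitone (hr : 0 < r) : Antitone (tailRatio r) := by
  refine antitone_nat_of_succ_le fun j ↦ ?_
  rw [tailRatio, tailRatio, div_le_div_iff₀ (mul_poissonMeasure_real_singleton_pos hr _)
    (mul_poissonMeasure_real_singleton_pos hr _), mul_poissonMeasure_real_singleton r j]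
  have := mul_poissonMeasure_real_Ioi_le r j
  have := poissonMeasure_real_singleton_pos (j + 1) hr
  nlinarith

lemma headRatio_monotone (hr : 0 < r) : Monotone (headRatio r) := by
  refine monotone_nat_of_le_succ fun j ↦ ?_
  rw [headRatio, headRatio, div_le_div_iff₀ (mul_poissonMeasure_real_singleton_pos hr _)
    (mul_poissonMeasure_real_singleton_pos hr _), mul_poissonMeasure_real_singleton r j]
  have h : r * Po(r).real (Iic j) ≤ (j + 1) * Po(r).real (Iic (j + 1)) :=
    (mul_poissonMeasure_real_Iic_le r j).trans
      (by gcongr; exact sub_le_self _ measureReal_nonneg)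
  nlinarith [mul_le_mul_of_nonneg_right h (poissonMeasure_real_singleton_pos (j + 1) hr).le]

/-- `g 0` does not enter the Stein equation (its coefficient is `0`); we take `g 0 = 0`. -/
noncomputable def steinSol (r : ℝ≥0) (A : Set ℕ) : ℕ → ℝ
  | 0 => 0
  | j + 1 => (Po(r).real (A ∩ Iic j) - Po(r).real A * Po(r).real (Iic j)) / (r * Po(r).real {j})

lemma steinSol_succ (A : Set ℕ) (j : ℕ) :
    steinSol r A (j + 1) =
      Po(r).real (A ∩ Iic j) * tailRatio r j - Po(r).real (A ∩ Ioi j) * headRatio r j := by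
  rw [steinSol, tailRatio, headRatio, ← measureReal_inter_Iic_add_inter_Ioi A j, ← compl_Iic,
    probReal_compl_eq_one_sub .of_discrete]
  ring

lemma mul_steinSol_succ (hr : 0 < r) (A : Set ℕ) (j : ℕ) :
    r * Po(r).real {j} * steinSol r A (j + 1) =
      Po(r).real (A ∩ Iic j) - Po(r).real A * Po(r).real (Iic j) :=
  mul_div_cancel₀ _ (mul_poissonMeasure_real_singleton_pos hr j).ne'

lemma natCast_mul_steinSol (hr : 0 < r) (A : Set ℕ) (j : ℕ) :
    j * Po(r).real {j} * steinSol r A j =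
      Po(r).real (A ∩ Iio j) - Po(r).real A * Po(r).real (Iio j) := by
  cases j with
  | zero => simp [steinSol]
  | succ j =>
    rw [Nat.cast_succ, ← mul_poissonMeasure_real_singleton, mul_steinSol_succ hr,
      Iio_add_one_eq_Iic]

lemma steinSol_stein_equation (hr : 0 < r) (A : Set ℕ) (j : ℕ) :
    r * steinSol r A (j + 1) - j * steinSol r A j = A.indicator 1 j - Po(r).real A := by
  have hj := poissonMeasure_real_singleton_pos (r := r) j hr
  have hA : Po(r).real (A ∩ {j}) = A.indicator 1 j * Po(r).real {j} := by
    by_cases h : j ∈ A <;> simp [h]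
  refine mul_left_cancel₀ hj.ne' ?_
  rw [mul_sub, ← mul_assoc, ← mul_assoc, mul_comm _ (r : ℝ), mul_comm _ (j : ℝ),
    mul_steinSol_succ hr, natCast_mul_steinSol hr, measureReal_inter_Iic,
    ← univ_inter (Iic j), measureReal_inter_Iic, hA]
  simp only [univ_inter]
  ring

lemma steinSol_union {A B : Set ℕ} (h : Disjoint A B) (j : ℕ) :
    steinSol r (A ∪ B) j = steinSol r A j + steinSol r B j := by
  cases j with
  | zero => simp [steinSol]
  | succ j =>
    simp only [steinSol]
    rw [union_inter_distrib_right, measureReal_union (μ := Po(r)) h .of_discrete,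
      measureReal_union (h.mono inter_subset_left inter_subset_left) .of_discrete]
    ring

lemma steinSol_compl (A : Set ℕ) (j : ℕ) : steinSol r Aᶜ j = -steinSol r A j := by
  have hU : steinSol r univ j = 0 := by cases j <;> simp [steinSol]
  rw [← union_compl_self A, steinSol_union disjoint_compl_right] at hU
  linarith

lemma abs_steinSol_le (hr : 0 < r) (A : Set ℕ) (j : ℕ) : |steinSol r A j| ≤ tailRatio r 0 := by
  cases j with
  | zero => simpa [steinSol] using tailRatio_nonneg hr 0
  | succ j =>
    have ha := tailRatio_nonneg hr j
    have hhead : Po(r).real (A ∩ Ioi j) * headRatio r j ≤ tailRatio r j := by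
      rw [headRatio, tailRatio, ← mul_div_assoc]
      gcongr
      exact (mul_le_of_le_one_right measureReal_nonneg measureReal_le_one).trans
        (measureReal_mono inter_subset_right)
    rw [steinSol_succ]
    refine (abs_sub_le_of_nonneg_of_le (mul_nonneg measureReal_nonneg ha)
      (mul_le_of_le_one_left ha measureReal_le_one)
      (mul_nonneg measureReal_nonneg (headRatio_nonneg hr j)) hhead).trans
      (tailRatio_antitone hr j.zero_le)

lemma steinSol_succ_sub_nonpos (hr : 0 < r) {B : Set ℕ} {j : ℕ} (hj : j ∉ B) :
    steinSol r B (j + 1) - steinSol r B j ≤ 0 := by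
  cases j with
  | zero =>
    have h0 : B ∩ Iic 0 = ∅ := by ext n; by_cases n = 0 <;> simp_all
    rw [steinSol_succ, h0, steinSol, measureReal_empty, zero_mul, zero_sub, sub_zero,
      neg_nonpos]
    exact mul_nonneg measureReal_nonneg (headRatio_nonneg hr 0)
  | succ j =>
    have hIic : B ∩ Iic (j + 1) = B ∩ Iic j := by ext n; by_cases n = j + 1 <;> simp_all; omega
    have hIoi : B ∩ Ioi j = B ∩ Ioi (j + 1) := by ext n; by_cases n = j + 1 <;> simp_all; omega
    rw [steinSol_succ, steinSol_succ, hIic, hIoi]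
    nlinarith [mul_le_mul_of_nonneg_left (tailRatio_antitone hr j.le_succ)
        (measureReal_nonneg (μ := Po(r)) (s := B ∩ Iic j)),
      mul_le_mul_of_nonneg_left (headRatio_monotone hr j.le_succ)
        (measureReal_nonneg (μ := Po(r)) (s := B ∩ Ioi (j + 1)))]

lemma steinSol_singleton_succ (hr : 0 < r) (k : ℕ) :
    steinSol r {k} (k + 1) = Po(r).real (Ioi k) / r := by
  rw [steinSol, inter_eq_left.2 (singleton_subset_iff.2 self_mem_Iic), ← compl_Iic,
    probReal_compl_eq_one_sub .of_discrete]
  field_simp [(poissonMeasure_real_singleton_pos k hr).ne']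

lemma steinSol_singleton_self (hr : 0 < r) (j : ℕ) :
    steinSol r {j + 1} (j + 1) = -Po(r).real (Iic j) / (j + 1) := by
  rw [steinSol, singleton_inter_eq_empty.2 (by simp), measureReal_empty,
    mul_poissonMeasure_real_singleton]
  field_simp [(poissonMeasure_real_singleton_pos (j + 1) hr).ne']
  ring

lemma steinSol_singleton_succ_sub_le (hr : 0 < r) (k : ℕ) :
    steinSol r {k} (k + 1) - steinSol r {k} k ≤ (1 - Real.exp (-r)) / r := by
  rw [steinSol_singleton_succ hr, ← poissonMeasure_real_zero r, ← compl_Iic,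
    probReal_compl_eq_one_sub .of_discrete]
  cases k with
  | zero => simp [steinSol, show Iic (0 : ℕ) = {0} from Iic_bot]
  | succ j =>
    have key :
        Po(r).real (Iic j) / (j + 1) ≤ (Po(r).real (Iic (j + 1)) - Po(r).real {0}) / r := by
      rw [div_le_div_iff₀ (by positivity) (NNReal.coe_pos.2 hr)]
      linarith [mul_poissonMeasure_real_Iic_le r j]
    rw [steinSol_singleton_self hr]
    calc _ = (1 - Po(r).real (Iic (j + 1))) / r + Po(r).real (Iic j) / (j + 1) := by ring
      _ ≤ (1 - Po(r).real (Iic (j + 1))) / r +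
          (Po(r).real (Iic (j + 1)) - Po(r).real {0}) / r := by gcongr
      _ = _ := by ring

lemma steinSol_succ_sub_le (hr : 0 < r) (A : Set ℕ) (j : ℕ) :
    steinSol r A (j + 1) - steinSol r A j ≤ (1 - Real.exp (-r)) / r := by
  by_cases hj : j ∈ A
  · have hdisj : Disjoint (A \ {j}) {j} := disjoint_sdiff_left
    rw [← sdiff_union_of_subset (singleton_subset_iff.2 hj), steinSol_union hdisj,
      steinSol_union hdisj]
    linarith [steinSol_succ_sub_nonpos hr (B := A \ {j}) (j := j) (by simp),
      steinSol_singleton_succ_sub_le hr j]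
  · refine (steinSol_succ_sub_nonpos hr hj).trans (div_nonneg ?_ r.2)
    exact sub_nonneg.2 (Real.exp_le_one_iff.2 (neg_nonpos.2 r.2))

lemma abs_steinSol_succ_sub_le (hr : 0 < r) (A : Set ℕ) (j : ℕ) :
    |steinSol r A (j + 1) - steinSol r A j| ≤ (1 - Real.exp (-r)) / r := by
  refine abs_le.2 ⟨?_, steinSol_succ_sub_le hr A j⟩
  have := steinSol_succ_sub_le hr Aᶜ j
  rw [steinSol_compl, steinSol_compl] at this
  linarith

section SteinIdentity

variable {Ω : Type*} [MeasurableSpace Ω] {P : Measure Ω} {W : Ω → ℕ}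

lemma integral_steinSol_eq [IsProbabilityMeasure P] (hr : 0 < r) (hW : Measurable W)
    (A : Set ℕ) :
    ∫ ω, (r * steinSol r A (W ω + 1) - W ω * steinSol r A (W ω)) ∂P =
      P.real {ω | W ω ∈ A} - Po(r).real A := by
  simp_rw [steinSol_stein_equation hr, ← indicator_comp_right, Pi.one_comp]
  rw [integral_sub (integrable_const 1 |>.indicator (hW .of_discrete)) (integrable_const _),
    integral_indicator_one (hW .of_discrete)]
  simp [preimage]

lemma abs_integral_stein_le [IsFiniteMeasure P] (lam : ℝ) (hW : Measurable W)
    (hint : Integrable (fun ω ↦ (W ω : ℝ)) P) {τ : ℕ → ℝ} (hτ : Integrable (fun ω ↦ τ (W ω)) P)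
    {g : ℕ → ℝ} {C c : ℝ} (hgC : ∀ j, |g j| ≤ C) (hgc : ∀ j, |g (j + 1) - g j| ≤ c)
    (hstein : ∫ ω, ((W ω : ℝ) - lam) * g (W ω) ∂P =
      ∫ ω, τ (W ω) * (g (W ω + 1) - g (W ω)) ∂P) :
    |∫ ω, (lam * g (W ω + 1) - W ω * g (W ω)) ∂P| ≤ c * ∫ ω, |τ (W ω) - lam| ∂P := by
  have hmeas (f : ℕ → ℝ) : AEStronglyMeasurable (fun ω ↦ f (W ω)) P :=
    (Measurable.of_discrete.comp hW).aestronglyMeasurable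
  have hΔ : Integrable (fun ω ↦ g (W ω + 1) - g (W ω)) P :=
    .of_bound (hmeas fun j ↦ g (j + 1) - g j) c (ae_of_all _ fun ω ↦ hgc (W ω))
  have hsize : Integrable (fun ω ↦ ((W ω : ℝ) - lam) * g (W ω)) P :=
    (hint.sub (integrable_const lam)).mul_bdd (hmeas g) (ae_of_all _ fun ω ↦ hgC (W ω))
  have hτΔ : Integrable (fun ω ↦ τ (W ω) * (g (W ω + 1) - g (W ω))) P :=
    hτ.mul_bdd (hmeas fun j ↦ g (j + 1) - g j) (ae_of_all _ fun ω ↦ hgc (W ω))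
  have hkey : ∫ ω, (lam * g (W ω + 1) - W ω * g (W ω)) ∂P =
      ∫ ω, (lam - τ (W ω)) * (g (W ω + 1) - g (W ω)) ∂P := calc
    _ = ∫ ω, (lam * (g (W ω + 1) - g (W ω)) - ((W ω : ℝ) - lam) * g (W ω)) ∂P :=
      integral_congr_ae (ae_of_all _ fun ω ↦ by ring)
    _ = ∫ ω, (lam * (g (W ω + 1) - g (W ω)) - τ (W ω) * (g (W ω + 1) - g (W ω))) ∂P := by
      rw [integral_sub (hΔ.const_mul lam) hsize, integral_sub (hΔ.const_mul lam) hτΔ, hstein]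
    _ = _ := integral_congr_ae (ae_of_all _ fun ω ↦ by ring)
  rw [hkey, ← integral_const_mul, ← Real.norm_eq_abs]
  refine norm_integral_le_of_norm_le (((hτ.sub (integrable_const lam)).abs).const_mul c)
    (ae_of_all _ fun ω ↦ ?_)
  rw [Real.norm_eq_abs, abs_mul, abs_sub_comm, mul_comm]
  exact mul_le_mul_of_nonneg_right (hgc (W ω)) (abs_nonneg _)

end SteinIdentity

end PoissonStein

/-- Let `λ > 0`, `W` a `ℕ`-valued random variable with `E[W] < ∞`, and
`τ : ℕ → ℝ` with `E|τ(W)| < ∞` such that `E[(W − λ) g(W)] = E[τ(W) Δg(W)]` for every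
bounded `g`. Then `d_TV(L(W), Po(λ)) ≤ ((1 − e^{−λ})/λ) E|τ(W) − λ|`. -/
theorem dTV_le_of_tau
    {Ω : Type*} [MeasurableSpace Ω] (P : Measure Ω) [IsProbabilityMeasure P]
    (lam : ℝ) (hlam : 0 < lam)
    (W : Ω → ℕ) (hW : Measurable W) (hint : Integrable (fun ω => (W ω : ℝ)) P)
    (τ : ℕ → ℝ) (hτ : Integrable (fun ω => τ (W ω)) P)
    (hstein : ∀ g : ℕ → ℝ, (∃ C : ℝ, ∀ j : ℕ, |g j| ≤ C) →
      ∫ ω, ((W ω : ℝ) - lam) * g (W ω) ∂P =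
        ∫ ω, τ (W ω) * (g (W ω + 1) - g (W ω)) ∂P) :
    (⨆ A : Set ℕ, |(P {ω | W ω ∈ A}).toReal - poissonProb lam A|) ≤
      (1 - Real.exp (-lam)) / lam * ∫ ω, |τ (W ω) - lam| ∂P := by
  open PoissonStein in
  lift lam to ℝ≥0 using hlam.le with r
  have hr : 0 < r := NNReal.coe_pos.1 hlam
  refine ciSup_le fun A ↦ ?_
  rw [poissonProb_eq_measureReal, ← measureReal_def, ← integral_steinSol_eq hr hW]
  exact abs_integral_stein_le r hW hint hτ (abs_steinSol_le hr A) (abs_steinSol_succ_sub_le hr A)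
    (hstein _ ⟨_, abs_steinSol_le hr A⟩)
end

section
/- Let λ > 0 and let k ≥ 1 be an integer. There exists a unique probability mass function p on ℤ≥0 such that Σ_{w ≥ 0} p(w) [(λ + 1{w = k}) g(w+1) − (w + 1{w = k}) g(w)] = 0 for every bounded function g : ℤ≥0 → ℝ; equivalently, p is the unique probability mass function satisfying p(w) (w + 1{w = k}) = p(w−1) (λ + 1{w−1 = k}) for all w ≥ 1. Moreover p(k) > 0 and Σ_{w} w p(w) < ∞. -/
/-- `p` is a probability mass function on `ℕ`. -/
def IsPmf (p : ℕ → ℝ) : Prop :=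
  (∀ w, 0 ≤ p w) ∧ HasSum p 1

/-- `p` annihilates the perturbed Poisson Stein operator
`B_k g(w) = (λ + 1{w = k}) g(w+1) − (w + 1{w = k}) g(w)` for all bounded `g`, i.e.
`Σ_w p(w) B_k g(w) = 0` (the series converging) for every bounded `g : ℕ → ℝ`. -/
def SteinStationary (lam : ℝ) (k : ℕ) (p : ℕ → ℝ) : Prop :=
  ∀ g : ℕ → ℝ, (∃ C : ℝ, ∀ j : ℕ, |g j| ≤ C) →
    HasSum (fun w : ℕ =>
      p w * ((lam + if w = k then (1 : ℝ) else 0) * g (w + 1) -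
        ((w : ℝ) + if w = k then (1 : ℝ) else 0) * g w)) 0

/-- The detailed-balance recursion `p(w)(w + 1{w = k}) = p(w−1)(λ + 1{w−1 = k})`, `w ≥ 1`. -/
def SteinRecursion (lam : ℝ) (k : ℕ) (p : ℕ → ℝ) : Prop :=
  ∀ w : ℕ, 1 ≤ w →
    p w * ((w : ℝ) + if w = k then (1 : ℝ) else 0) =
      p (w - 1) * (lam + if w - 1 = k then (1 : ℝ) else 0)

/-!
Testing the Stein identity against the indicator of `{w + 1}` turns it into detailed balance
`p (w + 1) β (w + 1) = p w α w` for the birth rates `α w = λ + 1{w = k}` and death rates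
`β w = w + 1{w = k}`. Since `β (w + 1) > 0`, detailed balance determines `p` up to the factor
`p 0`, as a multiple of `q w = ∏_{i < w} α i / β (i + 1)`, which is summable by the ratio test
since `α` is bounded and `β w ≥ w`. Conversely, for summable `p`, detailed balance makes the
outflow series `Σ p w β w g w` the inflow series `Σ p w α w g (w + 1)` shifted by one place
(the new first term vanishes because `β 0 = 0`, i.e. `k ≠ 0`), so the two have the same sum.
-/

open Filter

theorem summable_mul_of_bounded {p f : ℕ → ℝ} (hp : Summable p)
    (hf : ∃ C : ℝ, ∀ j, |f j| ≤ C) : Summable (fun w => p w * f w) := by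
  obtain ⟨C, hC⟩ := hf
  refine hp.abs.mul_right C |>.of_norm_bounded fun w => ?_
  rw [Real.norm_eq_abs, abs_mul]
  exact mul_le_mul_of_nonneg_left (hC w) (abs_nonneg _)

theorem isPmf_inv_tsum_smul {q : ℕ → ℝ} (hq : Summable q) (hq0 : ∀ w, 0 ≤ q w)
    (hpos : 0 < ∑' w, q w) : IsPmf ((∑' w, q w)⁻¹ • q) :=
  ⟨fun w => mul_nonneg (inv_nonneg.mpr hpos.le) (hq0 w),
    by simpa [Pi.smul_def, hpos.ne'] using hq.hasSum.const_smul (∑' w, q w)⁻¹⟩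

namespace BirthDeath

variable {α β p : ℕ → ℝ}

def IsStationary (α β p : ℕ → ℝ) : Prop :=
  ∀ g : ℕ → ℝ, (∃ C : ℝ, ∀ j : ℕ, |g j| ≤ C) →
    HasSum (fun w : ℕ => p w * (α w * g (w + 1) - β w * g w)) 0

def DetailedBalance (α β p : ℕ → ℝ) : Prop :=
  ∀ w, p (w + 1) * β (w + 1) = p w * α w

noncomputable def balanceSeq (α β : ℕ → ℝ) : ℕ → ℝ
  | 0 => 1
  | w + 1 => balanceSeq α β w * α w / β (w + 1)

theorem IsStationary.detailedBalance (h : IsStationary α β p) : DetailedBalance α β p := by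
  intro w
  let g : ℕ → ℝ := fun j => if j = w + 1 then 1 else 0
  have hg : ∃ C : ℝ, ∀ j, |g j| ≤ C := ⟨1, fun j => by unfold g; split_ifs <;> simp⟩
  let t : ℕ → ℝ := fun j => p j * (α j * g (j + 1) - β j * g j)
  have hpair : HasSum t (t w + t (w + 1)) := by
    rw [← Finset.sum_pair (by omega)]
    refine hasSum_sum_of_ne_finset_zero fun j hj => ?_
    simp only [Finset.mem_insert, Finset.mem_singleton, not_or] at hj
    simp [t, g, hj.1, hj.2]
  have htw : t w = p w * α w := by simp [t, g]
  have htw' : t (w + 1) = -(p (w + 1) * β (w + 1)) := by simp [t, g]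
  linarith [(h g hg).unique hpair]

theorem DetailedBalance.isStationary (h : DetailedBalance α β p) (hβ : β 0 = 0)
    (hα : ∃ A : ℝ, ∀ w, |α w| ≤ A) (hp : Summable p) : IsStationary α β p := by
  rintro g ⟨C, hC⟩
  have hin : Summable (fun w => p w * α w * g (w + 1)) :=
    summable_mul_of_bounded (summable_mul_of_bounded hp hα) ⟨C, fun w => hC (w + 1)⟩
  have hout : HasSum (fun w => p w * β w * g w) (∑' w, p w * α w * g (w + 1)) := by
    have hshift : HasSum (fun n => p (n + 1) * β (n + 1) * g (n + 1))
        (∑' w, p w * α w * g (w + 1)) := by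
      simpa only [h _] using hin.hasSum
    simpa [hβ] using hshift.zero_add (f := fun w => p w * β w * g w)
  simpa [mul_sub, mul_assoc] using hin.hasSum.sub hout

theorem DetailedBalance.smul (h : DetailedBalance α β p) (c : ℝ) :
    DetailedBalance α β (c • p) := fun w => by
  simp only [Pi.smul_apply, smul_eq_mul, mul_assoc, h w]

theorem detailedBalance_balanceSeq (hβ : ∀ w, β (w + 1) ≠ 0) :
    DetailedBalance α β (balanceSeq α β) := fun w =>
  div_mul_cancel₀ _ (hβ w)

theorem DetailedBalance.eq_smul_balanceSeq (hβ : ∀ w, β (w + 1) ≠ 0)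
    (h : DetailedBalance α β p) : p = p 0 • balanceSeq α β := by
  funext w
  induction w with
  | zero => simp [balanceSeq]
  | succ w ih =>
    simp only [Pi.smul_apply, smul_eq_mul] at ih ⊢
    rw [balanceSeq, ← mul_div_assoc, eq_div_iff (hβ w), h w, ih, mul_assoc]

theorem DetailedBalance.eq_inv_tsum_smul (hβ : ∀ w, β (w + 1) ≠ 0)
    (h : DetailedBalance α β p) (h1 : HasSum p 1) :
    p = (∑' w, balanceSeq α β w)⁻¹ • balanceSeq α β := by
  have hp := h.eq_smul_balanceSeq hβ
  set c := p 0
  have hc : c ≠ 0 := fun h0 => by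
    rw [h0, zero_smul] at hp
    exact one_ne_zero (h1.unique (hp ▸ hasSum_zero))
  rw [hp] at h1
  have hq : HasSum (balanceSeq α β) c⁻¹ := by
    simpa [smul_smul, hc] using h1.const_smul c⁻¹
  rwa [hq.tsum_eq, inv_inv]

theorem balanceSeq_pos (hα : ∀ w, 0 < α w) (hβ : ∀ w, 0 < β (w + 1)) :
    ∀ w, 0 < balanceSeq α β w
  | 0 => one_pos
  | w + 1 => div_pos (mul_pos (balanceSeq_pos hα hβ w) (hα w)) (hβ w)

theorem summable_balanceSeq {r : ℝ} (hr : r < 1)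
    (h : ∀ᶠ w in atTop, ‖α w / β (w + 1)‖ ≤ r) : Summable (balanceSeq α β) := by
  refine summable_of_ratio_norm_eventually_le hr (h.mono fun w hw => ?_)
  rw [balanceSeq, mul_div_assoc, norm_mul, mul_comm r]
  exact mul_le_mul_of_nonneg_left hw (norm_nonneg _)

theorem DetailedBalance.summable_death_mul (h : DetailedBalance α β p)
    (hα : ∃ A : ℝ, ∀ w, |α w| ≤ A) (hp : Summable p) :
    Summable (fun w => β w * p w) := by
  rw [← summable_nat_add_iff 1]
  have hshift : (fun n => β (n + 1) * p (n + 1)) = fun n => p n * α n :=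
    funext fun n => by rw [mul_comm, h]
  exact hshift ▸ summable_mul_of_bounded hp hα

end BirthDeath

open BirthDeath

def birthRate (lam : ℝ) (k w : ℕ) : ℝ := lam + if w = k then 1 else 0

def deathRate (k w : ℕ) : ℝ := (w : ℝ) + if w = k then 1 else 0

section Rates

variable {lam : ℝ} {k : ℕ} {p : ℕ → ℝ}

theorem steinStationary_iff :
    SteinStationary lam k p ↔ IsStationary (birthRate lam k) (deathRate k) p := Iff.rfl

theorem steinRecursion_iff :
    SteinRecursion lam k p ↔ DetailedBalance (birthRate lam k) (deathRate k) p := by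
  refine ⟨fun h w => by simpa [birthRate, deathRate] using h (w + 1) (by omega),
    fun h w hw => ?_⟩
  obtain ⟨v, rfl⟩ := Nat.exists_eq_add_of_le' hw
  simpa [birthRate, deathRate] using h v

theorem abs_birthRate_le (w : ℕ) : |birthRate lam k w| ≤ |lam| + 1 := by
  calc |birthRate lam k w| ≤ |lam| + |if w = k then (1 : ℝ) else 0| := abs_add_le _ _
    _ ≤ |lam| + 1 := by gcongr; split_ifs <;> simp

theorem birthRate_pos (hlam : 0 < lam) (w : ℕ) : 0 < birthRate lam k w := by
  unfold birthRate
  split_ifs <;> linarith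

theorem cast_le_deathRate (w : ℕ) : (w : ℝ) ≤ deathRate k w := by
  unfold deathRate
  split_ifs <;> simp

theorem deathRate_succ_pos (w : ℕ) : 0 < deathRate k (w + 1) :=
  (Nat.cast_pos.mpr w.succ_pos).trans_le (cast_le_deathRate _)

theorem deathRate_zero (hk : k ≠ 0) : deathRate k 0 = 0 := by
  simp [deathRate, hk.symm]

theorem eventually_norm_birthRate_div_deathRate_le :
    ∀ᶠ w in atTop, ‖birthRate lam k w / deathRate k (w + 1)‖ ≤ 1 / 2 := by
  filter_upwards [eventually_ge_atTop ⌈2 * (|lam| + 1)⌉₊] with w hw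
  have hd : 2 * (|lam| + 1) ≤ deathRate k (w + 1) :=
    (Nat.le_ceil _).trans <| (Nat.cast_le.mpr (hw.trans w.le_succ)).trans (cast_le_deathRate _)
  rw [norm_div, Real.norm_eq_abs, Real.norm_of_nonneg (deathRate_succ_pos w).le,
    div_le_iff₀ (deathRate_succ_pos w)]
  linarith [abs_birthRate_le (lam := lam) (k := k) w]

end Rates

/-- For `λ > 0` and an integer `k ≥ 1`, there is a unique probability mass
function `p` on `ℕ` with `Σ_w p(w) B_k g(w) = 0` for every bounded `g`; equivalently, a pmf has
this property iff it satisfies the recursion `p(w)(w + 1{w=k}) = p(w−1)(λ + 1{w−1=k})` for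
`w ≥ 1`. Moreover such `p` has `p(k) > 0` and finite mean `Σ_w w p(w) < ∞`. -/
theorem perturbed_stationary_exists_unique (lam : ℝ) (hlam : 0 < lam) (k : ℕ) (hk : 1 ≤ k) :
    (∃! p : ℕ → ℝ, IsPmf p ∧ SteinStationary lam k p) ∧
      (∀ p : ℕ → ℝ, IsPmf p → (SteinStationary lam k p ↔ SteinRecursion lam k p)) ∧
      (∀ p : ℕ → ℝ, IsPmf p → SteinStationary lam k p →
        0 < p k ∧ Summable (fun w : ℕ => (w : ℝ) * p w)) := by
  set q := balanceSeq (birthRate lam k) (deathRate k)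
  have hβ : ∀ w, deathRate k (w + 1) ≠ 0 := fun w => (deathRate_succ_pos w).ne'
  have hα : ∃ A : ℝ, ∀ w, |birthRate lam k w| ≤ A := ⟨|lam| + 1, abs_birthRate_le⟩
  have hq_pos : ∀ w, 0 < q w := balanceSeq_pos (birthRate_pos hlam) deathRate_succ_pos
  have hq : Summable q :=
    summable_balanceSeq (by norm_num) eventually_norm_birthRate_div_deathRate_le
  have hS : 0 < ∑' w, q w := hq.tsum_pos (fun w => (hq_pos w).le) 0 (hq_pos 0)
  have hequiv (p : ℕ → ℝ) (hp : IsPmf p) :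
      SteinStationary lam k p ↔ SteinRecursion lam k p := by
    rw [steinStationary_iff, steinRecursion_iff]
    exact ⟨IsStationary.detailedBalance,
      fun h => h.isStationary (deathRate_zero (by omega)) hα hp.2.summable⟩
  have huniq (p : ℕ → ℝ) (hp : IsPmf p) (hst : SteinStationary lam k p) :
      p = (∑' w, q w)⁻¹ • q :=
    (steinStationary_iff.mp hst).detailedBalance.eq_inv_tsum_smul hβ hp.2
  have hπ : IsPmf ((∑' w, q w)⁻¹ • q) := isPmf_inv_tsum_smul hq (fun w => (hq_pos w).le) hS
  refine ⟨⟨_, ⟨hπ, (hequiv _ hπ).2 <| steinRecursion_iff.2 <|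
      (detailedBalance_balanceSeq hβ).smul _⟩, fun p hp => huniq p hp.1 hp.2⟩,
    hequiv, fun p hp hst => ⟨?_, ?_⟩⟩
  · rw [huniq p hp hst]
    exact mul_pos (inv_pos.2 hS) (hq_pos k)
  · have hmean :=
      (steinStationary_iff.mp hst).detailedBalance.summable_death_mul hα hp.2.summable
    exact hmean.of_nonneg_of_le (fun w => mul_nonneg w.cast_nonneg (hp.1 w))
      fun w => mul_le_mul_of_nonneg_right (cast_le_deathRate w) (hp.1 w)
end

section
/- Let d ≥ 2 be an integer, λ > 0, μ ∈ ℝ^d with μ_i ≥ 0 and Σ_i μ_i = 1, and K ∈ ℤ≥0^d. Let W be a random vector in ℤ≥0^d with E[Σ_i W_i] < ∞ satisfying E[B_K g(W)] = 0 for every bounded function g : ℤ≥0^d → ℝ, and suppose P[W = K + ε^(1)] = P[W = K + ε^(2)]. Then for every bounded g : ℤ≥0^d → ℝ, E[A g(W)] = −P[W = K + ε^(1)] · Δ_{12} g(K). -/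
open MeasureTheory

/-- The `i`-th standard unit vector of `ℤ≥0^d`. -/
def unitVec (d : ℕ) (i : Fin d) : Fin d → ℕ := fun j => if j = i then 1 else 0

/-- The multivariate Poisson Stein operator
`A g(w) = Σ_i λμ_i [g(w+ε⁽ⁱ⁾) − g(w)] + Σ_i w_i [g(w−ε⁽ⁱ⁾) − g(w)]`. -/
noncomputable def mvSteinA (d : ℕ) (lam : ℝ) (mu : Fin d → ℝ)
    (g : (Fin d → ℕ) → ℝ) (w : Fin d → ℕ) : ℝ :=
  (∑ i, lam * mu i * (g (w + unitVec d i) - g w)) +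
    ∑ i, (w i : ℝ) * (g (w - unitVec d i) - g w)

/-- The perturbed multivariate Stein operator `B_K`, perturbed at `K` in the coordinates
`e1`, `e2` (the "first two" coordinates). -/
noncomputable def mvSteinB (d : ℕ) (lam : ℝ) (mu : Fin d → ℝ) (K : Fin d → ℕ)
    (e1 e2 : Fin d) (g : (Fin d → ℕ) → ℝ) (w : Fin d → ℕ) : ℝ :=
  mvSteinA d lam mu g w
    + (1 / 2) * (if w = K + unitVec d e2 then (1 : ℝ) else 0) * (g (w + unitVec d e1) - g w)
    + (1 / 2) * (if w = K + unitVec d e1 then (1 : ℝ) else 0) * (g (w + unitVec d e2) - g w)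
    + (1 / 2) * (if w = K + unitVec d e1 then (1 : ℝ) else 0) * (g (w - unitVec d e1) - g w)
    + (1 / 2) * (if w = K + unitVec d e2 then (1 : ℝ) else 0) * (g (w - unitVec d e2) - g w)

/-! Each perturbation term of `B_K` is supported on the single point `K + ε⁽ⁱ⁾`, so its
expectation is `P[W = K + ε⁽ⁱ⁾]` times its bracket evaluated there; when the two point masses
agree the four brackets add up to `Δ₁₂ g(K)`. The only analytic input is the integrability of
`A g(W)`, from `|A g(w)| ≤ 2 sup |g| · (Σ |λ μ_i| + Σ w_i)`. -/

section PointMass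

variable {Ω α : Type*} [DecidableEq α] {W : Ω → α}

lemma mul_ite_mul_comp_eq_indicator (x : α) (a : ℝ) (f : α → ℝ) :
    (fun ω => a * (if W ω = x then 1 else 0) * f (W ω)) =
      {ω | W ω = x}.indicator fun _ => a * f x := by
  funext ω
  by_cases h : W ω = x <;> simp [h]

variable [MeasurableSpace Ω] [MeasurableSpace α] [MeasurableSingletonClass α] {P : Measure Ω}

lemma integral_mul_ite_mul_comp (hW : Measurable W) (x : α) (a : ℝ) (f : α → ℝ) :
    ∫ ω, a * (if W ω = x then 1 else 0) * f (W ω) ∂P = (P {ω | W ω = x}).toReal * (a * f x) := by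
  have hx : MeasurableSet {ω | W ω = x} := hW (measurableSet_singleton x)
  rw [mul_ite_mul_comp_eq_indicator, integral_indicator_const _ hx, smul_eq_mul, measureReal_def]

lemma integrable_mul_ite_mul_comp [IsFiniteMeasure P] (hW : Measurable W) (x : α) (a : ℝ)
    (f : α → ℝ) : Integrable (fun ω => a * (if W ω = x then 1 else 0) * f (W ω)) P := by
  rw [mul_ite_mul_comp_eq_indicator]
  exact (integrable_const _).indicator (hW (measurableSet_singleton x))

end PointMass

section SteinOperator

variable {d : ℕ} {lam : ℝ} {mu : Fin d → ℝ} {g : (Fin d → ℕ) → ℝ} {C : ℝ}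

lemma abs_mvSteinA_le (hg : ∀ w, |g w| ≤ C) (w : Fin d → ℕ) :
    |mvSteinA d lam mu g w| ≤ 2 * C * ∑ i, |lam * mu i| + 2 * C * ∑ i, (w i : ℝ) := by
  have hdiff : ∀ a b, |g a - g b| ≤ 2 * C := fun a b =>
    (abs_sub _ _).trans (by linarith [hg a, hg b])
  rw [Finset.mul_sum, Finset.mul_sum]
  refine (abs_add_le _ _).trans (add_le_add ?_ ?_) <;>
    refine (Finset.abs_sum_le_sum_abs _ _).trans (Finset.sum_le_sum fun i _ => ?_) <;>
    rw [abs_mul, mul_comm (2 * C)]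
  · exact mul_le_mul_of_nonneg_left (hdiff _ _) (abs_nonneg _)
  · rw [Nat.abs_cast]
    exact mul_le_mul_of_nonneg_left (hdiff _ _) (Nat.cast_nonneg _)

variable {Ω : Type*} [MeasurableSpace Ω] {P : Measure Ω} [IsFiniteMeasure P] {W : Ω → Fin d → ℕ}

lemma integrable_mvSteinA_comp (hW : Measurable W)
    (hint : Integrable (fun ω => ∑ i, (W ω i : ℝ)) P) (hg : ∀ w, |g w| ≤ C) :
    Integrable (fun ω => mvSteinA d lam mu g (W ω)) P :=
  ((integrable_const _).add (hint.const_mul (2 * C))).mono'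
    ((measurable_of_countable (mvSteinA d lam mu g)).comp hW).aestronglyMeasurable
    (Filter.Eventually.of_forall fun ω => abs_mvSteinA_le hg (W ω))

lemma integral_mvSteinB_comp (hW : Measurable W)
    (hA : Integrable (fun ω => mvSteinA d lam mu g (W ω)) P) (K : Fin d → ℕ) (e1 e2 : Fin d) :
    ∫ ω, mvSteinB d lam mu K e1 e2 g (W ω) ∂P =
      ∫ ω, mvSteinA d lam mu g (W ω) ∂P
        + (P {ω | W ω = K + unitVec d e2}).toReal *
            (1 / 2 * (g (K + unitVec d e1 + unitVec d e2) - g (K + unitVec d e2)))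
        + (P {ω | W ω = K + unitVec d e1}).toReal *
            (1 / 2 * (g (K + unitVec d e1 + unitVec d e2) - g (K + unitVec d e1)))
        + (P {ω | W ω = K + unitVec d e1}).toReal * (1 / 2 * (g K - g (K + unitVec d e1)))
        + (P {ω | W ω = K + unitVec d e2}).toReal * (1 / 2 * (g K - g (K + unitVec d e2))) := by
  have h1 := integrable_mul_ite_mul_comp (P := P) hW (K + unitVec d e2) (1 / 2)
    fun w => g (w + unitVec d e1) - g w
  have h2 := integrable_mul_ite_mul_comp (P := P) hW (K + unitVec d e1) (1 / 2)
    fun w => g (w + unitVec d e2) - g w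
  have h3 := integrable_mul_ite_mul_comp (P := P) hW (K + unitVec d e1) (1 / 2)
    fun w => g (w - unitVec d e1) - g w
  have h4 := integrable_mul_ite_mul_comp (P := P) hW (K + unitVec d e2) (1 / 2)
    fun w => g (w - unitVec d e2) - g w
  simp only [mvSteinB]
  rw [integral_add, integral_add, integral_add, integral_add,
    integral_mul_ite_mul_comp hW _ _ fun w => g (w + unitVec d e1) - g w,
    integral_mul_ite_mul_comp hW _ _ fun w => g (w + unitVec d e2) - g w,
    integral_mul_ite_mul_comp hW _ _ fun w => g (w - unitVec d e1) - g w,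
    integral_mul_ite_mul_comp hW _ _ fun w => g (w - unitVec d e2) - g w,
    add_right_comm K (unitVec d e2), add_tsub_cancel_right, add_tsub_cancel_right]
  exacts [hA, h1, hA.add h1, h2, (hA.add h1).add h2, h3, ((hA.add h1).add h2).add h3, h4]

end SteinOperator

theorem mv_perturbed_stein_identity_general
    {Ω : Type*} [MeasurableSpace Ω] (P : Measure Ω) [IsProbabilityMeasure P]
    (d : ℕ) (e1 e2 : Fin d) (lam : ℝ) (mu : Fin d → ℝ) (K : Fin d → ℕ)
    (W : Ω → Fin d → ℕ) (hW : Measurable W)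
    (hint : Integrable (fun ω => ∑ i, (W ω i : ℝ)) P)
    (hstein : ∀ g : (Fin d → ℕ) → ℝ, (∃ C : ℝ, ∀ w, |g w| ≤ C) →
      ∫ ω, mvSteinB d lam mu K e1 e2 g (W ω) ∂P = 0)
    (hsym : P {ω | W ω = K + unitVec d e1} = P {ω | W ω = K + unitVec d e2}) :
    ∀ g : (Fin d → ℕ) → ℝ, (∃ C : ℝ, ∀ w, |g w| ≤ C) →
      ∫ ω, mvSteinA d lam mu g (W ω) ∂P =
        -(P {ω | W ω = K + unitVec d e1}).toReal *
          (g (K + unitVec d e1 + unitVec d e2) - g (K + unitVec d e1)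
            - g (K + unitVec d e2) + g K) := by
  intro g ⟨C, hC⟩
  have hB := hstein g ⟨C, hC⟩
  rw [integral_mvSteinB_comp hW (integrable_mvSteinA_comp hW hint hC), ← hsym] at hB
  linarith

/-- Let `d ≥ 2`, `λ > 0`, `μ ∈ ℝ^d` nonnegative with `Σ μ_i = 1`, and
`K ∈ ℤ≥0^d`. If `W` is a random vector in `ℤ≥0^d` with finite mean satisfying
`E[B_K g(W)] = 0` for all bounded `g` and `P[W = K+ε⁽¹⁾] = P[W = K+ε⁽²⁾]`, then for every
bounded `g`, `E[A g(W)] = −P[W = K+ε⁽¹⁾] · Δ₁₂ g(K)`. -/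
theorem mv_perturbed_stein_identity
    {Ω : Type*} [MeasurableSpace Ω] (P : Measure Ω) [IsProbabilityMeasure P]
    (d : ℕ) (hd : 2 ≤ d) (e1 e2 : Fin d) (he1 : e1.val = 0) (he2 : e2.val = 1)
    (lam : ℝ) (hlam : 0 < lam)
    (mu : Fin d → ℝ) (hmu : ∀ i, 0 ≤ mu i) (hmusum : ∑ i, mu i = 1)
    (K : Fin d → ℕ)
    (W : Ω → Fin d → ℕ) (hW : Measurable W)
    (hint : Integrable (fun ω => ∑ i, (W ω i : ℝ)) P)
    (hstein : ∀ g : (Fin d → ℕ) → ℝ, (∃ C : ℝ, ∀ w, |g w| ≤ C) →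
      ∫ ω, mvSteinB d lam mu K e1 e2 g (W ω) ∂P = 0)
    (hsym : P {ω | W ω = K + unitVec d e1} = P {ω | W ω = K + unitVec d e2}) :
    ∀ g : (Fin d → ℕ) → ℝ, (∃ C : ℝ, ∀ w, |g w| ≤ C) →
      ∫ ω, mvSteinA d lam mu g (W ω) ∂P =
        -(P {ω | W ω = K + unitVec d e1}).toReal *
          (g (K + unitVec d e1 + unitVec d e2) - g (K + unitVec d e1)
            - g (K + unitVec d e2) + g K) :=
  mv_perturbed_stein_identity_general P d e1 e2 lam mu K W hW hint hstein hsym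
end

section
/- Let d ≥ 2 be an integer, λ > 0, μ ∈ ℝ^d with μ_i ≥ 0 and Σ_i μ_i = 1, and K ∈ ℤ≥0^d. Let W be a random vector in ℤ≥0^d with E[Σ_i W_i] < ∞ such that E[B_K g(W)] = 0 holds for every bounded function g : ℤ≥0^d → ℝ and also for each coordinate projection g(w) = w_i, i = 1, …, d, and suppose P[W = K + ε^(1)] = P[W = K + ε^(2)]. Then E[W_i] = λ μ_i for every i = 1, …, d; in particular the perturbation is expectation neutral. -/
/-! Applied to the coordinate projection `w ↦ w_i`, the operator `B_K` gives
`λμ_i − w_i ± ½ (1{w = K+ε⁽²⁾} − 1{w = K+ε⁽¹⁾})`, the sign term present only for `i ∈ {e1, e2}`.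
Its expectation vanishes because `W` is as likely to sit at `K+ε⁽¹⁾` as at `K+ε⁽²⁾`, so the
Stein identity for the projection reduces to `λμ_i − E[W_i] = 0`. -/

open MeasureTheory


section Coordinates

variable {d : ℕ}

lemma natCast_add_unitVec_apply_sub (w : Fin d → ℕ) (i j : Fin d) :
    (((w + unitVec d j) i : ℕ) : ℝ) - w i = if i = j then 1 else 0 := by
  by_cases h : i = j <;> simp [unitVec, h]

lemma natCast_sub_unitVec_apply_sub {w : Fin d → ℕ} {j : Fin d} (hw : 0 < w j) (i : Fin d) :
    (((w - unitVec d j) i : ℕ) : ℝ) - w i = -(if i = j then 1 else 0) := by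
  by_cases h : i = j
  · subst h
    simp [unitVec, Nat.cast_sub (Nat.one_le_iff_ne_zero.mpr hw.ne')]
  · simp [unitVec, h]

lemma natCast_mul_sub_unitVec_apply_sub (w : Fin d → ℕ) (i j : Fin d) :
    (w j : ℝ) * ((((w - unitVec d j) i : ℕ) : ℝ) - w i) = -(w j * if i = j then 1 else 0) := by
  rcases (w j).eq_zero_or_pos with hw | hw
  · simp [hw]
  · rw [natCast_sub_unitVec_apply_sub hw, mul_neg]

lemma ite_eq_add_unitVec_mul_sub (K w : Fin d → ℕ) (i j : Fin d) :
    (if w = K + unitVec d j then (1 : ℝ) else 0) * ((((w - unitVec d j) i : ℕ) : ℝ) - w i)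
      = -((if w = K + unitVec d j then (1 : ℝ) else 0) * if i = j then 1 else 0) := by
  by_cases hw : w = K + unitVec d j
  · rw [if_pos hw, one_mul, one_mul, natCast_sub_unitVec_apply_sub (by simp [hw, unitVec])]
  · simp [hw]

end Coordinates

lemma mvSteinA_coord (d : ℕ) (lam : ℝ) (mu : Fin d → ℝ) (i : Fin d) (w : Fin d → ℕ) :
    mvSteinA d lam mu (fun w => (w i : ℝ)) w = lam * mu i - w i := by
  simp only [mvSteinA]
  simp_rw [natCast_add_unitVec_apply_sub, natCast_mul_sub_unitVec_apply_sub]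
  simp [sub_eq_add_neg]

lemma mvSteinB_coord (d : ℕ) (lam : ℝ) (mu : Fin d → ℝ) (K : Fin d → ℕ) (e1 e2 i : Fin d)
    (w : Fin d → ℕ) :
    mvSteinB d lam mu K e1 e2 (fun w => (w i : ℝ)) w
      = lam * mu i - w i + (1 / 2) * ((if i = e1 then 1 else 0) - if i = e2 then 1 else 0) *
          ((if w = K + unitVec d e2 then 1 else 0) - if w = K + unitVec d e1 then 1 else 0) := by
  simp only [mvSteinB, mvSteinA_coord, natCast_add_unitVec_apply_sub, mul_assoc,
    ite_eq_add_unitVec_mul_sub]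
  ring

section Expectation

variable {Ω α : Type*} [DecidableEq α] {X : Ω → α}

lemma ite_eq_eq_indicator_preimage (a : α) :
    (fun ω => if X ω = a then (1 : ℝ) else 0) = (X ⁻¹' {a}).indicator 1 := by
  funext ω
  by_cases h : X ω = a <;> simp [h]

variable [MeasurableSpace Ω] [MeasurableSpace α] [MeasurableSingletonClass α] {P : Measure Ω}

lemma integrable_ite_eq [IsFiniteMeasure P] (hX : Measurable X) (a : α) :
    Integrable (fun ω => if X ω = a then (1 : ℝ) else 0) P := by
  rw [ite_eq_eq_indicator_preimage]
  exact (integrable_const 1).indicator (hX (measurableSet_singleton a))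

lemma integral_ite_eq (hX : Measurable X) (a : α) :
    ∫ ω, (if X ω = a then (1 : ℝ) else 0) ∂P = P.real {ω | X ω = a} := by
  rw [ite_eq_eq_indicator_preimage, integral_indicator_one (hX (measurableSet_singleton a))]
  rfl

lemma integral_ite_eq_sub_ite_eq [IsFiniteMeasure P] (hX : Measurable X) {a b : α}
    (hab : P {ω | X ω = a} = P {ω | X ω = b}) :
    ∫ ω, ((if X ω = a then (1 : ℝ) else 0) - if X ω = b then 1 else 0) ∂P = 0 := by
  rw [integral_sub (integrable_ite_eq hX a) (integrable_ite_eq hX b), integral_ite_eq hX,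
    integral_ite_eq hX, measureReal_def, measureReal_def, hab, sub_self]

lemma MeasureTheory.Integrable.of_sum_nonneg {ι : Type*} [Fintype ι] {f : ι → Ω → ℝ}
    (hsum : Integrable (fun ω => ∑ j, f j ω) P) (hf : ∀ j, AEStronglyMeasurable (f j) P)
    (hnonneg : ∀ j ω, 0 ≤ f j ω) (i : ι) : Integrable (f i) P :=
  hsum.mono' (hf i) <| ae_of_all _ fun ω => by
    rw [Real.norm_of_nonneg (hnonneg i ω)]
    exact Finset.single_le_sum (fun j _ => hnonneg j ω) (Finset.mem_univ i)

end Expectation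

theorem mv_perturbed_expectation_neutral_general
    {Ω : Type*} [MeasurableSpace Ω] (P : Measure Ω) [IsProbabilityMeasure P]
    (d : ℕ) (e1 e2 : Fin d) (lam : ℝ) (mu : Fin d → ℝ) (K : Fin d → ℕ)
    (W : Ω → Fin d → ℕ) (hW : Measurable W)
    (hint : Integrable (fun ω => ∑ i, (W ω i : ℝ)) P)
    (hproj : ∀ i : Fin d,
      ∫ ω, mvSteinB d lam mu K e1 e2 (fun w => (w i : ℝ)) (W ω) ∂P = 0)
    (hsym : P {ω | W ω = K + unitVec d e1} = P {ω | W ω = K + unitVec d e2}) :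
    ∀ i : Fin d, ∫ ω, (W ω i : ℝ) ∂P = lam * mu i := by
  intro i
  have hWi : Integrable (fun ω => (W ω i : ℝ)) P :=
    hint.of_sum_nonneg
      (fun j => (by fun_prop : Measurable fun ω => (W ω j : ℝ)).aestronglyMeasurable)
      (fun j ω => Nat.cast_nonneg _) i
  have key := hproj i
  simp_rw [mvSteinB_coord] at key
  rw [integral_add ?_ ?_, integral_const_mul, integral_ite_eq_sub_ite_eq hW hsym.symm,
    integral_sub (integrable_const _) hWi] at key
  · simp only [integral_const, probReal_univ, smul_eq_mul, one_mul, mul_zero, add_zero] at key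
    linarith
  · exact (integrable_const _).sub hWi
  · exact ((integrable_ite_eq hW _).sub (integrable_ite_eq hW _)).const_mul _

/-- Let `d ≥ 2`, `λ > 0`, `μ` nonnegative with `Σ μ_i = 1`, `K ∈ ℤ≥0^d`.
If `W` has finite mean and `E[B_K g(W)] = 0` holds for every bounded `g` and also for each
coordinate projection `g(w) = w_i`, and `P[W = K+ε⁽¹⁾] = P[W = K+ε⁽²⁾]`, then
`E[W_i] = λ μ_i` for every `i`: the perturbation is expectation neutral. -/
theorem mv_perturbed_expectation_neutral
    {Ω : Type*} [MeasurableSpace Ω] (P : Measure Ω) [IsProbabilityMeasure P]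
    (d : ℕ) (hd : 2 ≤ d) (e1 e2 : Fin d) (he1 : e1.val = 0) (he2 : e2.val = 1)
    (lam : ℝ) (hlam : 0 < lam)
    (mu : Fin d → ℝ) (hmu : ∀ i, 0 ≤ mu i) (hmusum : ∑ i, mu i = 1)
    (K : Fin d → ℕ)
    (W : Ω → Fin d → ℕ) (hW : Measurable W)
    (hint : Integrable (fun ω => ∑ i, (W ω i : ℝ)) P)
    (hstein : ∀ g : (Fin d → ℕ) → ℝ, (∃ C : ℝ, ∀ w, |g w| ≤ C) →
      ∫ ω, mvSteinB d lam mu K e1 e2 g (W ω) ∂P = 0)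
    (hproj : ∀ i : Fin d,
      ∫ ω, mvSteinB d lam mu K e1 e2 (fun w => (w i : ℝ)) (W ω) ∂P = 0)
    (hsym : P {ω | W ω = K + unitVec d e1} = P {ω | W ω = K + unitVec d e2}) :
    ∀ i : Fin d, ∫ ω, (W ω i : ℝ) ∂P = lam * mu i :=
  mv_perturbed_expectation_neutral_general P d e1 e2 lam mu K W hW hint hproj hsym
end

section
/- Let d ≥ 2 be an integer, λ > 0, μ ∈ ℝ^d with μ_i ≥ 0, Σ_i μ_i = 1 and μ_1 = μ_2, and K ∈ ℤ≥0^d with K_1 = K_2. Let σ : ℤ≥0^d → ℤ≥0^d denote the map that swaps the first two coordinates. If W is a random vector in ℤ≥0^d with E[Σ_i W_i] < ∞ satisfying E[B_K g(W)] = 0 for every bounded function g : ℤ≥0^d → ℝ, then the swapped vector σ(W) = (W_2, W_1, W_3, …, W_d) also satisfies E[B_K g(σ(W))] = 0 for every bounded g. In particular, if the distribution satisfying this identity is unique, it is symmetric in the first two coordinates. -/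
open MeasureTheory


/-!
Let `σ` swap the coordinates `e1` and `e2`. Relabelling coordinates by `σ` permutes the terms of
the Poisson Stein operator, and when `μ` and `K` are `σ`-invariant it also exchanges the four
perturbation terms of `B_K`, so `B_K g (w ∘ σ) = B_K (g ∘ σ) w`. As `g ∘ σ` is bounded whenever
`g` is, `W ∘ σ` inherits the Stein identity from `W`; under uniqueness the two laws coincide.
-/

section Permutation

variable {d : ℕ} (σ : Equiv.Perm (Fin d))

lemma unitVec_comp_perm (i : Fin d) : unitVec d i ∘ σ = unitVec d (σ.symm i) := by
  funext j
  simp only [unitVec, Function.comp_apply, Equiv.eq_symm_apply]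

lemma comp_perm_add_unitVec (w : Fin d → ℕ) (i : Fin d) :
    w ∘ σ + unitVec d i = (w + unitVec d (σ i)) ∘ σ := by
  rw [show (w + unitVec d (σ i)) ∘ σ = w ∘ σ + unitVec d (σ i) ∘ σ from rfl,
    unitVec_comp_perm, Equiv.symm_apply_apply]

lemma comp_perm_sub_unitVec (w : Fin d → ℕ) (i : Fin d) :
    w ∘ σ - unitVec d i = (w - unitVec d (σ i)) ∘ σ := by
  rw [show (w - unitVec d (σ i)) ∘ σ = w ∘ σ - unitVec d (σ i) ∘ σ from rfl,
    unitVec_comp_perm, Equiv.symm_apply_apply]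

lemma mvSteinA_comp_perm (lam : ℝ) (mu : Fin d → ℝ) (hmu : ∀ i, mu (σ i) = mu i)
    (g : (Fin d → ℕ) → ℝ) (w : Fin d → ℕ) :
    mvSteinA d lam mu g (w ∘ σ) = mvSteinA d lam mu (fun v => g (v ∘ σ)) w := by
  unfold mvSteinA
  congr 1 <;> refine Fintype.sum_equiv σ _ _ fun i => ?_
  · rw [hmu, comp_perm_add_unitVec]
  · rw [comp_perm_sub_unitVec, Function.comp_apply]

end Permutation

section Swap

open Equiv

lemma comp_swap_eq_self {α β : Type*} [DecidableEq α] {a b : α} {f : α → β} (h : f a = f b) :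
    f ∘ swap a b = f := by
  funext x
  rw [Function.comp_apply, swap_apply_def]
  split_ifs <;> simp_all

variable {d : ℕ} {e1 e2 : Fin d}

lemma mvSteinB_comp_swap (lam : ℝ) (mu : Fin d → ℝ) (K : Fin d → ℕ)
    (hmu12 : mu e1 = mu e2) (hK12 : K e1 = K e2) (g : (Fin d → ℕ) → ℝ) (w : Fin d → ℕ) :
    mvSteinB d lam mu K e1 e2 g (w ∘ swap e1 e2)
      = mvSteinB d lam mu K e1 e2 (fun v => g (v ∘ swap e1 e2)) w := by
  have hmu : ∀ i, mu (swap e1 e2 i) = mu i := congrFun (comp_swap_eq_self hmu12)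
  have hcond : ∀ i, (w ∘ swap e1 e2 = K + unitVec d i) ↔ w = K + unitVec d (swap e1 e2 i) := by
    intro i
    have hK : K + unitVec d i = (K + unitVec d (swap e1 e2 i)) ∘ swap e1 e2 := by
      rw [← comp_perm_add_unitVec, comp_swap_eq_self hK12]
    rw [hK, (swap e1 e2).surjective.right_cancellable]
  unfold mvSteinB
  simp only [mvSteinA_comp_perm _ lam mu hmu, hcond, comp_perm_add_unitVec, comp_perm_sub_unitVec,
    swap_apply_left, swap_apply_right]
  ring

end Swap

section Pushforward

variable {Ω α : Type*} [MeasurableSpace Ω] [MeasurableSpace α] [Countable α]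
  [MeasurableSingletonClass α] {P : Measure Ω} {V : Ω → α}

lemma integral_map_of_countable (hV : Measurable V) (f : α → ℝ) :
    ∫ a, f a ∂P.map V = ∫ ω, f (V ω) ∂P :=
  integral_map hV.aemeasurable (measurable_of_countable f).aestronglyMeasurable

lemma integrable_map_of_countable (hV : Measurable V) (f : α → ℝ) :
    Integrable f (P.map V) ↔ Integrable (fun ω => f (V ω)) P :=
  integrable_map_measure (measurable_of_countable f).aestronglyMeasurable hV.aemeasurable

end Pushforward

lemma integral_mvSteinB_comp_swap_eq_zero {Ω : Type*} [MeasurableSpace Ω] {P : Measure Ω}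
    {d : ℕ} {e1 e2 : Fin d} {lam : ℝ} {mu : Fin d → ℝ} {K : Fin d → ℕ}
    (hmu12 : mu e1 = mu e2) (hK12 : K e1 = K e2) {W : Ω → Fin d → ℕ}
    (hstein : ∀ g : (Fin d → ℕ) → ℝ, (∃ C : ℝ, ∀ w, |g w| ≤ C) →
      ∫ ω, mvSteinB d lam mu K e1 e2 g (W ω) ∂P = 0)
    (g : (Fin d → ℕ) → ℝ) (hg : ∃ C : ℝ, ∀ w, |g w| ≤ C) :
    ∫ ω, mvSteinB d lam mu K e1 e2 g (W ω ∘ Equiv.swap e1 e2) ∂P = 0 := by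
  obtain ⟨C, hC⟩ := hg
  simp_rw [mvSteinB_comp_swap lam mu K hmu12 hK12]
  exact hstein _ ⟨C, fun w => hC _⟩

theorem mv_perturbed_symmetry_general
    {Ω : Type*} [MeasurableSpace Ω] (P : Measure Ω) [IsProbabilityMeasure P]
    (d : ℕ) (e1 e2 : Fin d)
    (lam : ℝ)
    (mu : Fin d → ℝ)
    (hmu12 : mu e1 = mu e2)
    (K : Fin d → ℕ) (hK12 : K e1 = K e2)
    (W : Ω → Fin d → ℕ) (hW : Measurable W)
    (hint : Integrable (fun ω => ∑ i, (W ω i : ℝ)) P)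
    (hstein : ∀ g : (Fin d → ℕ) → ℝ, (∃ C : ℝ, ∀ w, |g w| ≤ C) →
      ∫ ω, mvSteinB d lam mu K e1 e2 g (W ω) ∂P = 0) :
    (∀ g : (Fin d → ℕ) → ℝ, (∃ C : ℝ, ∀ w, |g w| ≤ C) →
      ∫ ω, mvSteinB d lam mu K e1 e2 g (W ω ∘ Equiv.swap e1 e2) ∂P = 0) ∧
    ((∀ Q Q' : Measure (Fin d → ℕ), IsProbabilityMeasure Q → IsProbabilityMeasure Q' →
        Integrable (fun w => ∑ i, (w i : ℝ)) Q → Integrable (fun w => ∑ i, (w i : ℝ)) Q' →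
        (∀ g : (Fin d → ℕ) → ℝ, (∃ C : ℝ, ∀ w, |g w| ≤ C) →
          ∫ w, mvSteinB d lam mu K e1 e2 g w ∂Q = 0) →
        (∀ g : (Fin d → ℕ) → ℝ, (∃ C : ℝ, ∀ w, |g w| ≤ C) →
          ∫ w, mvSteinB d lam mu K e1 e2 g w ∂Q' = 0) →
        Q = Q') →
      Measure.map (fun ω => W ω ∘ Equiv.swap e1 e2) P = Measure.map W P) := by
  have hstein_swap := integral_mvSteinB_comp_swap_eq_zero hmu12 hK12 hstein
  refine ⟨hstein_swap, fun huniq => ?_⟩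
  have hW_swap : Measurable fun ω => W ω ∘ Equiv.swap e1 e2 :=
    (measurable_of_countable fun w => w ∘ Equiv.swap e1 e2).comp hW
  have hint_swap : Integrable (fun ω => ∑ i, ((W ω ∘ Equiv.swap e1 e2) i : ℝ)) P := by
    refine hint.congr (.of_forall fun ω => ?_)
    exact (Equiv.sum_comp (Equiv.swap e1 e2) fun i => (W ω i : ℝ)).symm
  refine huniq _ _ (Measure.isProbabilityMeasure_map hW_swap.aemeasurable)
    (Measure.isProbabilityMeasure_map hW.aemeasurable)
    ((integrable_map_of_countable hW_swap _).2 hint_swap)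
    ((integrable_map_of_countable hW _).2 hint)
    (fun g hg => ?_) (fun g hg => ?_)
  · rw [integral_map_of_countable hW_swap]
    exact hstein_swap g hg
  · rw [integral_map_of_countable hW]
    exact hstein g hg

/-- Let `d ≥ 2`, `λ > 0`, `μ` nonnegative with `Σ μ_i = 1` and `μ_1 = μ_2`,
and `K ∈ ℤ≥0^d` with `K_1 = K_2`. If `W` has finite mean and satisfies `E[B_K g(W)] = 0` for
every bounded `g`, then the vector `σ(W)` obtained by swapping the first two coordinates of
`W` satisfies the same identity. In particular, if the distribution satisfying the identity
is unique, it is symmetric in the first two coordinates. -/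
theorem mv_perturbed_symmetry
    {Ω : Type*} [MeasurableSpace Ω] (P : Measure Ω) [IsProbabilityMeasure P]
    (d : ℕ) (hd : 2 ≤ d) (e1 e2 : Fin d) (he1 : e1.val = 0) (he2 : e2.val = 1)
    (lam : ℝ) (hlam : 0 < lam)
    (mu : Fin d → ℝ) (hmu : ∀ i, 0 ≤ mu i) (hmusum : ∑ i, mu i = 1)
    (hmu12 : mu e1 = mu e2)
    (K : Fin d → ℕ) (hK12 : K e1 = K e2)
    (W : Ω → Fin d → ℕ) (hW : Measurable W)
    (hint : Integrable (fun ω => ∑ i, (W ω i : ℝ)) P)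
    (hstein : ∀ g : (Fin d → ℕ) → ℝ, (∃ C : ℝ, ∀ w, |g w| ≤ C) →
      ∫ ω, mvSteinB d lam mu K e1 e2 g (W ω) ∂P = 0) :
    (∀ g : (Fin d → ℕ) → ℝ, (∃ C : ℝ, ∀ w, |g w| ≤ C) →
      ∫ ω, mvSteinB d lam mu K e1 e2 g (W ω ∘ Equiv.swap e1 e2) ∂P = 0) ∧
    ((∀ Q Q' : Measure (Fin d → ℕ), IsProbabilityMeasure Q → IsProbabilityMeasure Q' →
        Integrable (fun w => ∑ i, (w i : ℝ)) Q → Integrable (fun w => ∑ i, (w i : ℝ)) Q' →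
        (∀ g : (Fin d → ℕ) → ℝ, (∃ C : ℝ, ∀ w, |g w| ≤ C) →
          ∫ w, mvSteinB d lam mu K e1 e2 g w ∂Q = 0) →
        (∀ g : (Fin d → ℕ) → ℝ, (∃ C : ℝ, ∀ w, |g w| ≤ C) →
          ∫ w, mvSteinB d lam mu K e1 e2 g w ∂Q' = 0) →
        Q = Q') →
      Measure.map (fun ω => W ω ∘ Equiv.swap e1 e2) P = Measure.map W P) :=
  mv_perturbed_symmetry_general P d e1 e2 lam mu hmu12 K hK12 W hW hint hstein
end
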